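/- arXiv:1609.03727 — 4 statements merged into one kernel-verified Lean document; each statement's English description precedes it below -/
import Mathlib

section
/- Every continuous map φ : [0,1] → ℝ² whose range is contained in the segment [0,1] × {0} is approximable by embeddings: for every ε > 0 there is a continuous injective map f : [0,1] → ℝ² with dist(f x, φ x) < ε for all x ∈ [0,1]. -/
/-!
Lift the map off the line by its parameter: `x ↦ ((φ x).1, ε x / 2)` is injective because its
second coordinate is, and it moves every point vertically by at most `ε / 2`.
-/

open Function

theorem exists_injective_near_of_snd_eq_zero {X : Type*} [TopologicalSpace X]
    {φ : X → ℝ × ℝ} (hφ : Continuous φ) (hφ₂ : ∀ x, (φ x).2 = 0)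
    {τ : X → ℝ} (hτc : Continuous τ) (hτi : Injective τ) {ε : ℝ} (hτε : ∀ x, |τ x| < ε) :
    ∃ f : X → ℝ × ℝ, Continuous f ∧ Injective f ∧ ∀ x, dist (f x) (φ x) < ε := by
  refine ⟨fun x => ((φ x).1, τ x), by fun_prop, Injective.of_comp (f := Prod.snd) hτi, ?_⟩
  intro x
  have hφx : φ x = ((φ x).1, 0) := Prod.ext rfl (hφ₂ x)
  rw [hφx, dist_prod_same_left, Real.dist_eq, sub_zero]
  exact hτε x

/-- Every continuous map of the interval into the plane whose range lies in
the segment [0,1] × {0} is approximable by embeddings. -/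
theorem stmt_1 (φ : Set.Icc (0 : ℝ) 1 → ℝ × ℝ) (hφ : Continuous φ)
    (hrange : Set.range φ ⊆ Set.Icc (0 : ℝ) 1 ×ˢ ({0} : Set ℝ)) :
    ∀ ε > (0 : ℝ), ∃ f : Set.Icc (0 : ℝ) 1 → ℝ × ℝ,
      Continuous f ∧ Function.Injective f ∧ ∀ x, dist (f x) (φ x) < ε := by
  intro ε hε
  have hφ₂ : ∀ x, (φ x).2 = 0 := fun x => (hrange ⟨x, rfl⟩).2
  have hτi : Injective fun x : Set.Icc (0 : ℝ) 1 => ε / 2 * x :=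
    (mul_right_injective₀ (by positivity)).comp Subtype.val_injective
  refine exists_injective_near_of_snd_eq_zero hφ hφ₂ (by fun_prop) hτi fun x => ?_
  obtain ⟨hx₀, hx₁⟩ := x.2
  rw [abs_of_nonneg (by positivity)]
  nlinarith
end

section
/- For an integer d, the standard d-winding w_d : S¹ → ℂ ≅ ℝ², w_d(z) = z^d (where S¹ = {z ∈ ℂ : |z| = 1}), is approximable by embeddings if and only if d ∈ {-1, 0, 1}. -/
/-!
Near `z ^ d`, the curve `c t = f (exp (t I))` has a continuous logarithm `Λ` with `Im Λ t` within
`π / 2` of `d t` and `Λ (t + 2π) = Λ t + 2π d I`. For `d ≥ 2` the curve `-I Λ` crosses from left to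
right so fast that it must meet its translate by `2π`: a path crossing a rectangle horizontally
meets every path crossing it vertically, since otherwise `u s - v t` would have a continuous
logarithm on the rectangle although its argument winds once around the boundary. A meeting point
`Λ s = Λ t + 2πI` gives `c s = c t` with `s - t ∉ 2πℤ`, because `s - t = 2πn` would force `d n = 1`.
Negative `d` reduce to positive ones through `z ↦ z⁻¹`, and `z⁻¹`, small circles and the identity
approximate the cases `d ∈ {-1, 0, 1}`.
-/

open Complex Set
open scoped Real

theorem Convex.exists_continuousOn_exp_eq {E : Type*} [NormedAddCommGroup E] [NormedSpace ℝ E]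
    {K : Set E} (hK : Convex ℝ K) {g : E → ℂ} (hg : ContinuousOn g K)
    (hg0 : ∀ x ∈ K, g x ≠ 0) :
    ∃ L : E → ℂ, ContinuousOn L K ∧ ∀ x ∈ K, exp (L x) = g x := by
  classical
  rcases K.eq_empty_or_nonempty with rfl | ⟨x₀, hx₀⟩
  · exact ⟨0, continuousOn_empty _, by simp⟩
  have := hK.contractibleSpace ⟨x₀, hx₀⟩
  have := hK.locallyPathConnectedSpace
  obtain ⟨F, ⟨-, hF⟩, -⟩ := isCoveringMapOn_exp.existsUnique_continuousMap_lifts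
    ⟨K.domRestrict g, hg.domRestrict⟩ (a₀ := ⟨x₀, hx₀⟩) (exp_log (hg0 x₀ hx₀))
    fun x ↦ hg0 x x.2
  refine ⟨fun x ↦ if h : x ∈ K then F ⟨x, h⟩ else 0, ?_, fun x hx ↦ ?_⟩
  · rw [continuousOn_iff_continuous_domRestrict]
    convert F.continuous
    ext x
    simp [x.2]
  · simpa [hx] using congrFun hF ⟨x, hx⟩

theorem IsPreconnected.im_sub_arg_eq {X : Type*} [TopologicalSpace X] {S : Set X}
    (hS : IsPreconnected S) {Λ γ : X → ℂ} {ω : ℂ} (hΛ : ContinuousOn Λ S)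
    (hexp : ∀ x ∈ S, exp (Λ x) = γ x) (hslit : ∀ x ∈ S, ω * γ x ∈ slitPlane)
    {x y : X} (hx : x ∈ S) (hy : y ∈ S) :
    (Λ x).im - arg (ω * γ x) = (Λ y).im - arg (ω * γ y) := by
  have hω : ω ≠ 0 := left_ne_zero_of_mul (slitPlane_ne_zero (hslit x hx))
  set k : X → ℂ := fun x ↦ Λ x + log ω - log (ω * exp (Λ x))
  have hk : ContinuousOn k S :=
    (hΛ.add continuousOn_const).sub <| (continuousOn_const.mul hΛ.cexp).clog
      fun x hx ↦ by simpa [hexp x hx] using hslit x hx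
  have hkT : MapsTo k S (AddSubgroup.zmultiples (2 * π * I)) := by
    intro x hx
    obtain ⟨n, hn⟩ := exp_eq_exp_iff_exists_int.mp <|
      show exp (Λ x + log ω) = exp (log (ω * exp (Λ x))) by
        rw [exp_add, exp_log hω, exp_log (mul_ne_zero hω (exp_ne_zero _)), mul_comm]
    exact ⟨n, by simp [k, hn]⟩
  have := congrArg im <| hS.constant_of_mapsTo
    (isDiscrete_iff_discreteTopology.mpr (NormedSpace.discreteTopology_zmultiples _)) hk hkT hx hy
  simp only [k, sub_im, add_im, log_im, hexp x hx, hexp y hy] at this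
  linarith

namespace Complex

theorem mem_slitPlane_of_re_nonneg {z : ℂ} (hz : z ≠ 0) (hre : 0 ≤ z.re) : z ∈ slitPlane := by
  rcases hre.lt_or_eq with h | h
  · exact mem_slitPlane_iff.mpr (Or.inl h)
  · exact mem_slitPlane_iff.mpr (Or.inr fun him ↦ hz (ext h.symm him))

theorem arg_neg_I_mul {z : ℂ} (hz : z ≠ 0) (hre : 0 ≤ z.re) (him : 0 ≤ z.im) :
    arg (-I * z) = arg z - π / 2 := by
  have h₀ : 0 ≤ arg z := arg_nonneg_iff.mpr him
  have h₁ : arg z ≤ π / 2 := arg_le_pi_div_two_iff.mpr (Or.inl hre)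
  rw [(arg_mul_eq_add_arg_iff (neg_ne_zero.mpr I_ne_zero) hz).mpr, arg_neg_I]
  · ring
  · rw [arg_neg_I]
    constructor <;> linarith [Real.pi_pos]

theorem arg_I_mul {z : ℂ} (hz : z ≠ 0) (hre : 0 ≤ z.re) (him : z.im ≤ 0) :
    arg (I * z) = arg z + π / 2 := by
  have := arg_neg_I_mul (z := I * z) (by simp [hz]) (by simpa using him) (by simpa using hre)
  rw [← mul_assoc, neg_mul, I_mul_I, neg_neg, one_mul] at this
  linarith

end Complex

theorem exists_eq_of_crossing {a b p q : ℝ} (hab : a ≤ b) (hpq : p ≤ q) {u v : ℝ → ℂ}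
    (hu : ContinuousOn u (Icc a b)) (hv : ContinuousOn v (Icc p q))
    (hv_p : ∀ s ∈ Icc a b, (v p).im ≤ (u s).im) (hv_q : ∀ s ∈ Icc a b, (u s).im ≤ (v q).im)
    (hu_a : ∀ t ∈ Icc p q, (u a).re ≤ (v t).re) (hu_b : ∀ t ∈ Icc p q, (v t).re ≤ (u b).re) :
    ∃ s ∈ Icc a b, ∃ t ∈ Icc p q, u s = v t := by
  by_contra! hne
  set g : ℝ × ℝ → ℂ := fun x ↦ u x.1 - v x.2
  have hg0 : ∀ s ∈ Icc a b, ∀ t ∈ Icc p q, g (s, t) ≠ 0 := fun s hs t ht ↦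
    sub_ne_zero.mpr (hne s hs t ht)
  obtain ⟨L, hL, hLg⟩ := (convex_Icc a b).prod (convex_Icc p q) |>.exists_continuousOn_exp_eq
    (g := g) ((hu.comp continuousOn_fst fun x hx ↦ hx.1).sub
      (hv.comp continuousOn_snd fun x hx ↦ hx.2)) fun x hx ↦ hg0 x.1 hx.1 x.2 hx.2
  have ha : a ∈ Icc a b := left_mem_Icc.mpr hab
  have hb : b ∈ Icc a b := right_mem_Icc.mpr hab
  have hp : p ∈ Icc p q := left_mem_Icc.mpr hpq
  have hq : q ∈ Icc p q := right_mem_Icc.mpr hpq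
  -- On each side of the rectangle `g` stays in a closed half-plane, so the increment of `Im L`
  -- along that side is measured by a branch of `arg` rotated to that half-plane.
  have bottom := isPreconnected_Icc.im_sub_arg_eq (ω := -I)
    (Λ := fun s ↦ L (s, p)) (γ := fun s ↦ g (s, p))
    (hL.comp (by fun_prop) fun s hs ↦ ⟨hs, hp⟩) (fun s hs ↦ hLg _ ⟨hs, hp⟩)
    (fun s hs ↦ mem_slitPlane_of_re_nonneg (by simpa using hg0 s hs p hp)
      (by simpa [g] using hv_p s hs)) ha hb
  have right := isPreconnected_Icc.im_sub_arg_eq (ω := 1)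
    (Λ := fun t ↦ L (b, t)) (γ := fun t ↦ g (b, t))
    (hL.comp (by fun_prop) fun t ht ↦ ⟨hb, ht⟩) (fun t ht ↦ hLg _ ⟨hb, ht⟩)
    (fun t ht ↦ mem_slitPlane_of_re_nonneg (by simpa using hg0 b hb t ht)
      (by simpa [g] using hu_b t ht)) hp hq
  have top := isPreconnected_Icc.im_sub_arg_eq (ω := I)
    (Λ := fun s ↦ L (s, q)) (γ := fun s ↦ g (s, q))
    (hL.comp (by fun_prop) fun s hs ↦ ⟨hs, hq⟩) (fun s hs ↦ hLg _ ⟨hs, hq⟩)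
    (fun s hs ↦ mem_slitPlane_of_re_nonneg (by simpa using hg0 s hs q hq)
      (by simpa [g] using hv_q s hs)) ha hb
  have left := isPreconnected_Icc.im_sub_arg_eq (ω := -1)
    (Λ := fun t ↦ L (a, t)) (γ := fun t ↦ g (a, t))
    (hL.comp (by fun_prop) fun t ht ↦ ⟨ha, ht⟩) (fun t ht ↦ hLg _ ⟨ha, ht⟩)
    (fun t ht ↦ mem_slitPlane_of_re_nonneg (by simpa using hg0 a ha t ht)
      (by simpa [g] using hu_a t ht)) hp hq
  -- At each corner the two adjacent branches differ by `π / 2`; going around, they add up to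
  -- `2π`, while the increments of `Im L` add up to `0`.
  have hbp := arg_neg_I_mul (hg0 b hb p hp) (by simpa [g] using hu_b p hp)
    (by simpa [g] using hv_p b hb)
  have hbq := arg_I_mul (hg0 b hb q hq) (by simpa [g] using hu_b q hq)
    (by simpa [g] using hv_q b hb)
  have haq := arg_neg_I_mul (z := -1 * g (a, q)) (by simpa using hg0 a ha q hq)
    (by simpa [g] using hu_a q hq) (by simpa [g] using hv_q a ha)
  have hap := arg_I_mul (z := -1 * g (a, p)) (by simpa using hg0 a ha p hp)
    (by simpa [g] using hu_a p hp) (by simpa [g] using hv_p a ha)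
  rw [show -I * (-1 * g (a, q)) = I * g (a, q) by ring] at haq
  rw [show I * (-1 * g (a, p)) = -I * g (a, p) by ring] at hap
  simp only [one_mul] at bottom right top left
  linarith [Real.pi_pos]

theorem Function.Periodic.exists_argmax_le_argmin {f : ℝ → ℝ} {c : ℝ} (hper : Periodic f c)
    (hc : 0 < c) (hf : Continuous f) :
    ∃ S T, S ≤ T ∧ (∀ x, f x ≤ f S) ∧ ∀ x, f T ≤ f x := by
  have hK := hper.compact_of_continuous hc.ne' hf
  obtain ⟨-, ⟨S, rfl⟩, hS⟩ := hK.exists_isGreatest (range_nonempty f)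
  obtain ⟨-, ⟨T₀, rfl⟩, hT₀⟩ := hK.exists_isLeast (range_nonempty f)
  obtain ⟨T, hT, hTT₀⟩ := hper.exists_mem_Ico hc T₀ S
  exact ⟨S, T, hT.1, fun x ↦ hS ⟨x, rfl⟩, fun x ↦ hTT₀ ▸ hT₀ ⟨x, rfl⟩⟩

theorem exists_log_of_norm_sub_exp_lt {c : ℝ → ℂ} (hc : Continuous c)
    (hper : Function.Periodic c (2 * π)) (d : ℤ) (hcd : ∀ t : ℝ, ‖c t - exp (d * t * I)‖ < 1) :
    ∃ Λ : ℝ → ℂ, Continuous Λ ∧ (∀ t, exp (Λ t) = c t) ∧ (∀ t, |(Λ t).im - d * t| ≤ π / 2) ∧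
      ∀ (t : ℝ) (n : ℤ), Λ (t + n * (2 * π)) = Λ t + (d * n : ℤ) * (2 * π * I) := by
  set A : ℝ → ℂ := fun t ↦ c t * exp (-(d * t * I))
  have hA : ∀ t, ‖A t - 1‖ < 1 := fun t ↦ by
    have : A t - 1 = (c t - exp (d * t * I)) * exp (-(d * t * I)) := by
      simp only [A, sub_mul, ← exp_add, add_neg_cancel, exp_zero]
    simpa [this, norm_exp] using hcd t
  have hA_re : ∀ t, 0 < (A t).re := fun t ↦ by
    have := (abs_le.mp (abs_re_le_norm (A t - 1))).1
    simp only [sub_re, one_re] at this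
    linarith [hA t]
  have hA_slit : ∀ t, A t ∈ slitPlane := fun t ↦
    ball_one_subset_slitPlane (by simpa [dist_eq_norm] using hA t)
  refine ⟨fun t ↦ log (A t) + d * t * I,
    ((hc.mul (by fun_prop)).clog fun t ↦ hA_slit t).add (by fun_prop), fun t ↦ ?_, fun t ↦ ?_,
    fun t n ↦ ?_⟩
  · rw [exp_add, exp_log (slitPlane_ne_zero (hA_slit t))]
    simp only [A, mul_assoc, ← exp_add, neg_add_cancel, exp_zero, mul_one]
  · convert abs_arg_le_pi_div_two_iff.mpr (hA_re t).le using 2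
    simp [log_im]
  · have hA_per : A (t + n * (2 * π)) = A t := by
      simp only [A, hper.int_mul n t]
      rw [show -(d * ↑(t + n * (2 * π)) * I) = -(d * t * I) + (-(d * n) : ℤ) * (2 * π * I) by
        push_cast; ring, exp_add, exp_int_mul_two_pi_mul_I, mul_one]
    beta_reduce
    rw [hA_per]
    push_cast
    ring

theorem exists_eq_of_norm_sub_exp_lt {c : ℝ → ℂ} (hc : Continuous c)
    (hper : Function.Periodic c (2 * π)) {d : ℤ} (hd : 2 ≤ d)
    (hcd : ∀ t : ℝ, ‖c t - exp (d * t * I)‖ < 1) :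
    ∃ s t, c s = c t ∧ ∀ n : ℤ, s ≠ t + n * (2 * π) := by
  have hdR : (2 : ℝ) ≤ d := by exact_mod_cast hd
  obtain ⟨Λ, hΛ, hΛ_exp, hΛ_im, hΛ_per⟩ := exists_log_of_norm_sub_exp_lt hc hper d hcd
  obtain ⟨S, T, hST, hS, hT⟩ := Function.Periodic.exists_argmax_le_argmin (f := fun t ↦ (Λ t).re)
    (fun t ↦ by simpa using congrArg re (hΛ_per t 1)) Real.two_pi_pos (continuous_re.comp hΛ)
  have hΛ_im_sub (s t : ℝ) : (Λ s).im + d * (t - s) ≤ (Λ t).im + π := by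
    linarith [(abs_le.mp (hΛ_im s)).2, (abs_le.mp (hΛ_im t)).1]
  obtain ⟨s, -, t, -, hst⟩ := exists_eq_of_crossing (u := fun t ↦ -I * Λ t)
    (v := fun t ↦ -I * Λ t + 2 * π) (a := S - 2 * π) (b := T + 2 * π) (by linarith [Real.pi_pos])
    hST (by fun_prop) (by fun_prop) (fun s _ ↦ by simpa using hS s) (fun s _ ↦ by simpa using hT s)
    (fun t ht ↦ by
      have := hΛ_im_sub (S - 2 * π) t
      simpa using (show (Λ (S - 2 * π)).im ≤ (Λ t).im + 2 * π by nlinarith [ht.1, Real.pi_pos]))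
    (fun t ht ↦ by
      have := hΛ_im_sub t (T + 2 * π)
      simpa using (show (Λ t).im + 2 * π ≤ (Λ (T + 2 * π)).im by nlinarith [ht.2, Real.pi_pos]))
  have hΛst : Λ s = Λ t + 2 * π * I := by
    linear_combination I * hst + (Λ s - Λ t) * I_sq
  refine ⟨s, t, by rw [← hΛ_exp, ← hΛ_exp, hΛst, exp_add, exp_two_pi_mul_I, mul_one], fun n hn ↦ ?_⟩
  rw [hn, hΛ_per, add_right_inj] at hΛst
  have : ((d * n : ℤ) : ℂ) = 1 := by
    simpa [two_pi_I_ne_zero] using hΛst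
  rcases Int.eq_one_or_neg_one_of_mul_eq_one (by exact_mod_cast this) with rfl | rfl <;> omega

def ApproximableByEmbeddings {X Y : Type*} [TopologicalSpace X] [PseudoMetricSpace Y]
    (φ : X → Y) : Prop :=
  ∀ ε > (0 : ℝ), ∃ f : X → Y, Continuous f ∧ Function.Injective f ∧ ∀ x, dist (f x) (φ x) < ε

section ApproximableByEmbeddings

variable {X X' Y : Type*} [TopologicalSpace X] [TopologicalSpace X'] [PseudoMetricSpace Y]

theorem approximableByEmbeddings_of_injective {φ : X → Y} (hc : Continuous φ)
    (hi : Function.Injective φ) : ApproximableByEmbeddings φ :=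
  fun _ hε ↦ ⟨φ, hc, hi, fun x ↦ by simpa using hε⟩

theorem ApproximableByEmbeddings.comp_homeomorph {φ : X → Y} (h : ApproximableByEmbeddings φ)
    (e : X' ≃ₜ X) : ApproximableByEmbeddings (φ ∘ e) := fun ε hε ↦ by
  obtain ⟨f, hfc, hfi, hfφ⟩ := h ε hε
  exact ⟨f ∘ e, hfc.comp e.continuous, hfi.comp e.injective, fun x ↦ hfφ (e x)⟩

end ApproximableByEmbeddings

theorem approximableByEmbeddings_sphere_const (w : ℂ) :
    ApproximableByEmbeddings fun _ : Metric.sphere (0 : ℂ) 1 ↦ w := fun ε hε ↦ by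
  refine ⟨fun z ↦ w + (ε / 2 : ℝ) * z, by fun_prop, fun z z' h ↦ ?_, fun z ↦ ?_⟩
  · exact Subtype.ext (by simpa [hε.ne'] using h)
  · simpa [dist_eq_norm, abs_of_pos hε] using half_lt_self hε

theorem approximableByEmbeddings_sphere_zpow_neg_iff (d : ℤ) :
    ApproximableByEmbeddings (fun z : Metric.sphere (0 : ℂ) 1 ↦ (z : ℂ) ^ (-d)) ↔
      ApproximableByEmbeddings (fun z : Metric.sphere (0 : ℂ) 1 ↦ (z : ℂ) ^ d) := by
  have key (d : ℤ) (h : ApproximableByEmbeddings (fun z : Metric.sphere (0 : ℂ) 1 ↦ (z : ℂ) ^ d)) :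
      ApproximableByEmbeddings (fun z : Metric.sphere (0 : ℂ) 1 ↦ (z : ℂ) ^ (-d)) := by
    convert h.comp_homeomorph (Homeomorph.inv _) using 1
    ext z
    simp [zpow_neg]
  exact ⟨fun h ↦ by simpa using key _ h, key d⟩

theorem not_approximableByEmbeddings_sphere_zpow {d : ℤ} (hd : 2 ≤ d) :
    ¬ ApproximableByEmbeddings (fun z : Metric.sphere (0 : ℂ) 1 ↦ (z : ℂ) ^ d) := by
  intro h
  obtain ⟨f, hfc, hfi, hfd⟩ := h 1 one_pos
  set e : ℝ → Metric.sphere (0 : ℂ) 1 := fun t ↦ ⟨exp (t * I), by simp⟩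
  have he : Continuous e := by fun_prop
  have he_per : Function.Periodic e (2 * π) := fun t ↦ Subtype.ext <| by
    simpa [e, add_mul] using exp_periodic (t * I)
  obtain ⟨s, t, hst, hn⟩ := exists_eq_of_norm_sub_exp_lt (hfc.comp he)
    (fun t ↦ congrArg f (he_per t)) hd fun t ↦ by
      simpa [e, dist_eq_norm, ← exp_int_mul, mul_assoc] using hfd (e t)
  obtain ⟨n, hn'⟩ := exp_eq_exp_iff_exists_int.mp (congrArg Subtype.val (hfi hst))
  exact hn n (by simpa using congrArg im hn')

/-- The standard d-winding z ↦ z^d of the unit circle, regarded as a map into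
the plane ℂ ≅ ℝ², is approximable by embeddings iff d ∈ {-1, 0, 1}. -/
theorem stmt_3 (d : ℤ) :
    (∀ ε > (0 : ℝ), ∃ f : Metric.sphere (0 : ℂ) 1 → ℂ,
        Continuous f ∧ Function.Injective f ∧ ∀ z, dist (f z) ((z : ℂ) ^ d) < ε) ↔
    d = -1 ∨ d = 0 ∨ d = 1 := by
  change ApproximableByEmbeddings (fun z : Metric.sphere (0 : ℂ) 1 ↦ (z : ℂ) ^ d) ↔ _
  have h_one : ApproximableByEmbeddings (fun z : Metric.sphere (0 : ℂ) 1 ↦ (z : ℂ) ^ (1 : ℤ)) :=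
    approximableByEmbeddings_of_injective (by simpa using continuous_subtype_val) (by simp)
  constructor
  · intro h
    by_contra hd
    obtain ⟨n, hn, rfl | rfl⟩ : ∃ n : ℤ, 2 ≤ n ∧ (d = n ∨ d = -n) := ⟨d.natAbs, by omega, by omega⟩
    · exact not_approximableByEmbeddings_sphere_zpow hn h
    · exact not_approximableByEmbeddings_sphere_zpow hn
        ((approximableByEmbeddings_sphere_zpow_neg_iff n).mp h)
  · rintro (rfl | rfl | rfl)
    · exact (approximableByEmbeddings_sphere_zpow_neg_iff 1).mpr h_one
    · simpa using approximableByEmbeddings_sphere_const 1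
    · exact h_one
end

section
/- A transversal intersection of two segments is not disjoinable. Precisely: let φ, ψ : [0,1] → ℝ² be the affine parametrizations φ(t) = p₁ + t·(q₁-p₁) and ψ(t) = p₂ + t·(q₂-p₂) of segments [p₁,q₁] and [p₂,q₂] in ℝ², where q₁-p₁ and q₂-p₂ are linearly independent and the two segments intersect in exactly one point lying in the relative interior of each. Then there exists ε > 0 such that for all continuous maps f, g : [0,1] → ℝ² with dist(f x, φ x) < ε and dist(g x, ψ x) < ε for all x, the ranges of f and g intersect. -/
/-!
Take linear coordinates `L` on the plane in which the directions `q₁ - p₁` and `q₂ - p₂` become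
`1` and `i`, and let `s₀, t₀ ∈ (0, 1)` be the parameters of the intersection point. For `f`, `g`
close to the parametrizations, `H (a, c) = L (f a - g c)` stays close to `(a - s₀) + i (t₀ - c)`,
so on the sides `a = 0`, `a = 1`, `c = 0`, `c = 1` of the square it lies in the left, right,
upper and lower half-planes respectively. A nonvanishing such `H` would have a continuous
logarithm on the simply connected square, and the imaginary part of that logarithm would strictly
decrease along each of the four sides in turn, which is absurd. So `H` vanishes somewhere, which
is a common point of the ranges of `f` and `g`.
-/

open Real Set unitInterval

theorem Real.cos_le_cos_of_sin_nonneg {x y : ℝ} (hxy : x ≤ y)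
    (hsin : ∀ w ∈ Icc x y, 0 ≤ sin w) : cos y ≤ cos x :=
  antitoneOn_of_deriv_nonpos (convex_Icc x y) continuous_cos.continuousOn
    differentiable_cos.differentiableOn
    (fun w hw => by simpa [Real.deriv_cos] using hsin w (interior_subset hw))
    ⟨le_rfl, hxy⟩ ⟨hxy, le_rfl⟩ hxy

theorem lt_of_sin_pos_of_cos_neg_of_cos_pos {X : Type*} [TopologicalSpace X] [PreconnectedSpace X]
    {γ : X → ℝ} (hγ : Continuous γ) (hsin : ∀ x, 0 < sin (γ x)) {u v : X}
    (hu : cos (γ u) < 0) (hv : 0 < cos (γ v)) : γ v < γ u := by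
  by_contra! h
  have hrange : Icc (γ u) (γ v) ⊆ range γ :=
    (isPreconnected_range hγ).Icc_subset (mem_range_self u) (mem_range_self v)
  have := cos_le_cos_of_sin_nonneg h fun w hw => by
    obtain ⟨x, rfl⟩ := hrange hw
    exact (hsin x).le
  linarith

namespace Complex

theorem exp_im_pos_iff (w : ℂ) : 0 < (exp w).im ↔ 0 < Real.sin w.im := by
  rw [exp_im]; exact mul_pos_iff_of_pos_left (Real.exp_pos _)

theorem exp_im_neg_iff (w : ℂ) : (exp w).im < 0 ↔ Real.sin w.im < 0 := by
  rw [exp_im]; exact smul_neg_iff_of_pos_left (Real.exp_pos _)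

theorem exp_re_pos_iff (w : ℂ) : 0 < (exp w).re ↔ 0 < Real.cos w.im := by
  rw [exp_re]; exact mul_pos_iff_of_pos_left (Real.exp_pos _)

theorem exp_re_neg_iff (w : ℂ) : (exp w).re < 0 ↔ Real.cos w.im < 0 := by
  rw [exp_re]; exact smul_neg_iff_of_pos_left (Real.exp_pos _)

end Complex

theorem exists_continuous_exp_eq {A : Type*} [TopologicalSpace A] [SimplyConnectedSpace A]
    [LocallyPathConnectedSpace A] {h : A → ℂ} (hh : Continuous h) (hne : ∀ a, h a ≠ 0) :
    ∃ Θ : A → ℂ, Continuous Θ ∧ ∀ a, Complex.exp (Θ a) = h a := by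
  obtain ⟨a₀⟩ := PathConnectedSpace.nonempty (X := A)
  obtain ⟨Θ, -, hΘ⟩ := (Complex.isCoveringMapOn_exp.existsUnique_continuousMap_lifts ⟨h, hh⟩
    (Complex.exp_log (hne a₀)) hne).exists
  exact ⟨Θ, Θ.continuous, congrFun hΘ⟩

instance : ContractibleSpace I := (convex_Icc 0 1).contractibleSpace (nonempty_Icc.2 zero_le_one)

instance : LocallyPathConnectedSpace I := (convex_Icc 0 1).locallyPathConnectedSpace

theorem exists_eq_zero_of_boundary_signs {H : I × I → ℂ} (hH : Continuous H)
    (hleft : ∀ t, (H (0, t)).re < 0) (hright : ∀ t, 0 < (H (1, t)).re)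
    (hbot : ∀ s, 0 < (H (s, 0)).im) (htop : ∀ s, (H (s, 1)).im < 0) : ∃ z, H z = 0 := by
  by_contra! hne
  obtain ⟨Θ, hΘ, hexp⟩ := exists_continuous_exp_eq hH hne
  set θ : I × I → ℝ := fun z => (Θ z).im
  have hθ : Continuous θ := Complex.continuous_im.comp hΘ
  have sin_pos : ∀ z, 0 < (H z).im → 0 < sin (θ z) := fun z h =>
    (Complex.exp_im_pos_iff _).1 (hexp z ▸ h)
  have sin_neg : ∀ z, (H z).im < 0 → sin (θ z) < 0 := fun z h =>
    (Complex.exp_im_neg_iff _).1 (hexp z ▸ h)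
  have cos_pos : ∀ z, 0 < (H z).re → 0 < cos (θ z) := fun z h =>
    (Complex.exp_re_pos_iff _).1 (hexp z ▸ h)
  have cos_neg : ∀ z, (H z).re < 0 → cos (θ z) < 0 := fun z h =>
    (Complex.exp_re_neg_iff _).1 (hexp z ▸ h)
  -- Along each side `H` moves clockwise from one quadrant to the next, so `θ` decreases;
  -- shifting `θ` by a multiple of `π / 2` reduces every side to the bottom one.
  have bottom : θ (1, 0) < θ (0, 0) :=
    lt_of_sin_pos_of_cos_neg_of_cos_pos (γ := fun s => θ (s, 0)) (by fun_prop)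
      (fun s => sin_pos _ (hbot s)) (cos_neg _ (hleft 0)) (cos_pos _ (hright 0))
  have right : θ (1, 1) + π / 2 < θ (1, 0) + π / 2 :=
    lt_of_sin_pos_of_cos_neg_of_cos_pos (γ := fun t => θ (1, t) + π / 2) (by fun_prop)
      (fun t => by simpa [sin_add_pi_div_two] using cos_pos _ (hright t))
      (by simpa [cos_add_pi_div_two] using sin_pos _ (hbot 1))
      (by simpa [cos_add_pi_div_two] using sin_neg _ (htop 1))
  have top : θ (0, 1) + π < θ (1, 1) + π :=
    lt_of_sin_pos_of_cos_neg_of_cos_pos (γ := fun s => θ (s, 1) + π) (by fun_prop)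
      (fun s => by simpa [sin_add_pi] using sin_neg _ (htop s))
      (by simpa [cos_add_pi] using cos_pos _ (hright 1))
      (by simpa [cos_add_pi] using cos_neg _ (hleft 1))
  have left : θ (0, 0) - π / 2 < θ (0, 1) - π / 2 :=
    lt_of_sin_pos_of_cos_neg_of_cos_pos (γ := fun t => θ (0, t) - π / 2) (by fun_prop)
      (fun t => by simpa [sin_sub_pi_div_two] using cos_neg _ (hleft t))
      (by simpa [cos_sub_pi_div_two] using sin_neg _ (htop 0))
      (by simpa [cos_sub_pi_div_two] using sin_pos _ (hbot 0))
  linarith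

theorem exists_eq_zero_of_norm_sub_lt {H : I × I → ℂ} (hH : Continuous H) {s₀ t₀ : ℝ}
    (hclose : ∀ z : I × I,
      ‖H z - ⟨z.1 - s₀, t₀ - z.2⟩‖ < min (min s₀ (1 - s₀)) (min t₀ (1 - t₀))) :
    ∃ z, H z = 0 := by
  have hre : ∀ z, |(H z).re - (z.1 - s₀)| < min s₀ (1 - s₀) := fun z =>
    ((Complex.abs_re_le_norm _).trans_lt (hclose z)).trans_le (min_le_left _ _)
  have him : ∀ z, |(H z).im - (t₀ - z.2)| < min t₀ (1 - t₀) := fun z =>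
    ((Complex.abs_im_le_norm _).trans_lt (hclose z)).trans_le (min_le_right _ _)
  refine exists_eq_zero_of_boundary_signs hH (fun t => ?_) (fun t => ?_) (fun s => ?_) (fun s => ?_)
  · have := hre (0, t); simp only [Icc.coe_zero, abs_lt, lt_min_iff] at this; linarith
  · have := hre (1, t); simp only [Icc.coe_one, abs_lt, lt_min_iff] at this; linarith
  · have := him (s, 0); simp only [Icc.coe_zero, abs_lt, lt_min_iff] at this; linarith
  · have := him (s, 1); simp only [Icc.coe_one, abs_lt, lt_min_iff] at this; linarith

theorem exists_continuousLinearEquiv_complex {E : Type*} [NormedAddCommGroup E] [NormedSpace ℝ E]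
    (hE : Module.finrank ℝ E = 2) {u v : E} (huv : LinearIndependent ℝ ![u, v]) :
    ∃ L : E ≃L[ℝ] ℂ, L u = 1 ∧ L v = Complex.I := by
  have : FiniteDimensional ℝ E := Module.finite_of_finrank_eq_succ hE
  let b := basisOfLinearIndependentOfCardEqFinrank huv (by simp [hE])
  have hb : ∀ i, b i = ![u, v] i := by simp [b]
  refine ⟨(b.equiv Complex.basisOneI (Equiv.refl _)).toContinuousLinearEquiv, ?_, ?_⟩
  · simpa [hb] using b.equiv_apply 0 Complex.basisOneI (Equiv.refl _)
  · simpa [hb] using b.equiv_apply 1 Complex.basisOneI (Equiv.refl _)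

theorem map_sub_eq_mk_of_common_point {E F : Type*} [AddCommGroup E] [Module ℝ E]
    [FunLike F E ℂ] [LinearMapClass F ℝ E ℂ] {L : F} {p₁ q₁ p₂ q₂ : E}
    (hL₁ : L (q₁ - p₁) = 1) (hL₂ : L (q₂ - p₂) = Complex.I) {s₀ t₀ : ℝ}
    (hx : p₁ + s₀ • (q₁ - p₁) = p₂ + t₀ • (q₂ - p₂)) (a c : ℝ) :
    L ((p₁ + a • (q₁ - p₁)) - (p₂ + c • (q₂ - p₂))) = ⟨a - s₀, t₀ - c⟩ := by
  have : (p₁ + a • (q₁ - p₁)) - (p₂ + c • (q₂ - p₂))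
      = (a - s₀) • (q₁ - p₁) + (t₀ - c) • (q₂ - p₂) := by
    rw [← sub_eq_zero, ← sub_eq_zero.2 hx]
    module
  apply Complex.ext <;> simp [this, hL₁, hL₂]

theorem stmt_7_general (p₁ q₁ p₂ q₂ : EuclideanSpace ℝ (Fin 2))
    (hli : LinearIndependent ℝ ![q₁ - p₁, q₂ - p₂])
    (x : EuclideanSpace ℝ (Fin 2))
    (hx₁ : x ∈ openSegment ℝ p₁ q₁) (hx₂ : x ∈ openSegment ℝ p₂ q₂) :
    ∃ ε > (0 : ℝ), ∀ f g : Set.Icc (0 : ℝ) 1 → EuclideanSpace ℝ (Fin 2),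
      Continuous f → Continuous g →
      (∀ t : Set.Icc (0 : ℝ) 1, dist (f t) (p₁ + (t : ℝ) • (q₁ - p₁)) < ε) →
      (∀ t : Set.Icc (0 : ℝ) 1, dist (g t) (p₂ + (t : ℝ) • (q₂ - p₂)) < ε) →
      (Set.range f ∩ Set.range g).Nonempty := by
  rw [openSegment_eq_image'] at hx₁ hx₂
  obtain ⟨s₀, hs₀, rfl⟩ := hx₁
  obtain ⟨t₀, ht₀, hx⟩ := hx₂
  obtain ⟨L, hL₁, hL₂⟩ := exists_continuousLinearEquiv_complex finrank_euclideanSpace_fin hli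
  have hm : 0 < min (min s₀ (1 - s₀)) (min t₀ (1 - t₀)) :=
    lt_min (lt_min hs₀.1 (sub_pos.2 hs₀.2)) (lt_min ht₀.1 (sub_pos.2 ht₀.2))
  obtain ⟨δ, hδ, hLδ⟩ := Metric.tendsto_nhds_nhds.1 (L.continuous.tendsto 0) _ hm
  refine ⟨δ / 2, half_pos hδ, fun f g hf hg hfφ hgψ => ?_⟩
  obtain ⟨⟨a, c⟩, hac⟩ := exists_eq_zero_of_norm_sub_lt (H := fun z => L (f z.1 - g z.2))
    (s₀ := s₀) (t₀ := t₀) (by fun_prop) fun z => by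
      have herr : ‖(f z.1 - (p₁ + (z.1 : ℝ) • (q₁ - p₁))) -
          (g z.2 - (p₂ + (z.2 : ℝ) • (q₂ - p₂)))‖ < δ := by
        refine (norm_sub_le _ _).trans_lt ?_
        linarith [dist_eq_norm (f z.1) _ ▸ hfφ z.1, dist_eq_norm (g z.2) _ ▸ hgψ z.2]
      have := hLδ (x := _) (by rwa [dist_zero_right])
      rwa [map_zero, dist_zero_right, sub_sub_sub_comm, map_sub,
        map_sub_eq_mk_of_common_point hL₁ hL₂ hx.symm] at this
  exact ⟨f a, mem_range_self a, c, (sub_eq_zero.1 (L.map_eq_zero_iff.1 hac)).symm⟩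

/-- A transversal intersection of two segments in the plane is not
disjoinable. -/
theorem stmt_7 (p₁ q₁ p₂ q₂ : EuclideanSpace ℝ (Fin 2))
    (hli : LinearIndependent ℝ ![q₁ - p₁, q₂ - p₂])
    (x : EuclideanSpace ℝ (Fin 2))
    (hint : segment ℝ p₁ q₁ ∩ segment ℝ p₂ q₂ = {x})
    (hx₁ : x ∈ openSegment ℝ p₁ q₁) (hx₂ : x ∈ openSegment ℝ p₂ q₂) :
    ∃ ε > (0 : ℝ), ∀ f g : Set.Icc (0 : ℝ) 1 → EuclideanSpace ℝ (Fin 2),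
      Continuous f → Continuous g →
      (∀ t : Set.Icc (0 : ℝ) 1, dist (f t) (p₁ + (t : ℝ) • (q₁ - p₁)) < ε) →
      (∀ t : Set.Icc (0 : ℝ) 1, dist (g t) (p₂ + (t : ℝ) • (q₂ - p₂)) < ε) →
      (Set.range f ∩ Set.range g).Nonempty :=
  stmt_7_general p₁ q₁ p₂ q₂ hli x hx₁ hx₂
end

section
/- Let G be a compact metric space, φ : G → ℝ² continuous, and a ≥ 0. If there exists a continuous injective map f : G → ℝ² with dist(f x, φ x) ≤ a for all x ∈ G, then there exists a continuous equivariant map g : G̃ → S¹ (g(y,x) = −g(x,y)) whose restriction to the set A = {(x,y) ∈ G × G : dist(φ x, φ y) > 2a} is equivariantly homotopic to the Gauss map φ̃(x,y) = (φ x − φ y)/‖φ x − φ y‖ on A. (In the notation of the paper, a(φ) ≥ b(φ)/2.) -/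
/-!
Take the Gauss map of the embedding `f` as `g`. For `(x, y) ∈ A` the chord `f x - f y` differs
from `φ x - φ y` by at most `2a < ‖φ x - φ y‖`, so the segment joining the two chords misses the
origin; normalising it is an equivariant homotopy from `g` to the Gauss map of `φ`.
-/

open Metric Set AffineMap

section SphereNormalize

variable {E X : Type*} [NormedAddCommGroup E] [NormedSpace ℝ E]

noncomputable def sphereNormalize (v : X → E) (hv : ∀ x, v x ≠ 0) (x : X) : sphere (0 : E) 1 :=
  ⟨‖v x‖⁻¹ • v x, by simp [norm_smul, hv x]⟩

theorem continuous_sphereNormalize [TopologicalSpace X] {v : X → E} (hv : ∀ x, v x ≠ 0)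
    (hc : Continuous v) : Continuous (sphereNormalize v hv) :=
  ((hc.norm.inv₀ fun x => norm_ne_zero_iff.2 (hv x)).smul hc).subtype_mk _

theorem coe_sphereNormalize_of_eq_neg {v : X → E} (hv : ∀ x, v x ≠ 0) {x y : X}
    (h : v y = -v x) : (sphereNormalize v hv y : E) = -sphereNormalize v hv x := by
  simp only [sphereNormalize, h, norm_neg, smul_neg]

end SphereNormalize

theorem lineMap_neg_neg {R E : Type*} [Ring R] [AddCommGroup E] [Module R E] (u w : E) (t : R) :
    lineMap (-u) (-w) t = -lineMap u w t := by
  simp only [lineMap_apply_module, smul_neg, neg_add]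

theorem lineMap_ne_zero_of_norm_sub_lt {E : Type*} [NormedAddCommGroup E] [NormedSpace ℝ E]
    {u w : E} (h : ‖u - w‖ < ‖w‖) {t : ℝ} (ht : t ∈ Icc (0 : ℝ) 1) : lineMap u w t ≠ 0 := by
  have hsplit : lineMap u w t = w + (1 - t) • (u - w) := by
    rw [lineMap_apply_module]; module
  intro h0
  have hw : (1 - t) • (u - w) = -w := eq_neg_of_add_eq_zero_right (hsplit ▸ h0)
  have : ‖w‖ ≤ ‖u - w‖ :=
    calc ‖w‖ = ‖(1 - t) • (u - w)‖ := by rw [hw, norm_neg]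
      _ = (1 - t) * ‖u - w‖ := by rw [norm_smul, Real.norm_of_nonneg (by linarith [ht.2])]
      _ ≤ ‖u - w‖ := mul_le_of_le_one_left (norm_nonneg _) (by linarith [ht.1])
  linarith

theorem norm_chord_sub_chord_le {E G : Type*} [SeminormedAddCommGroup E] {f φ : G → E} {a : ℝ}
    (hfa : ∀ x, dist (f x) (φ x) ≤ a) (x y : G) :
    ‖(f x - f y) - (φ x - φ y)‖ ≤ 2 * a := by
  rw [sub_sub_sub_comm]
  calc ‖(f x - φ x) - (f y - φ y)‖ ≤ ‖f x - φ x‖ + ‖f y - φ y‖ := norm_sub_le _ _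
    _ ≤ 2 * a := by rw [← dist_eq_norm, ← dist_eq_norm]; linarith [hfa x, hfa y]

/-- If φ : G → ℝ² admits an a-close continuous injective map, then there is a
continuous equivariant map g from the deleted product of G to S¹ whose restriction to
A = {(x,y) : dist (φ x, φ y) > 2a} is equivariantly homotopic to the Gauss map of φ on A.
(In the notation of the paper, a(φ) ≥ b(φ)/2.) -/
theorem stmt_14 {G : Type*} [MetricSpace G]
    (φ : G → EuclideanSpace ℝ (Fin 2)) (hφ : Continuous φ) (a : ℝ) (ha : 0 ≤ a)
    (hemb : ∃ f : G → EuclideanSpace ℝ (Fin 2),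
      Continuous f ∧ Function.Injective f ∧ ∀ x, dist (f x) (φ x) ≤ a) :
    ∃ g : {p : G × G // p.1 ≠ p.2} → Metric.sphere (0 : EuclideanSpace ℝ (Fin 2)) 1,
      Continuous g ∧
      (∀ p q : {p : G × G // p.1 ≠ p.2}, q.1 = (p.1.2, p.1.1) →
        (g q : EuclideanSpace ℝ (Fin 2)) = -(g p : EuclideanSpace ℝ (Fin 2))) ∧
      ∃ H : Set.Icc (0 : ℝ) 1 × {p : G × G // dist (φ p.1) (φ p.2) > 2 * a} →
          Metric.sphere (0 : EuclideanSpace ℝ (Fin 2)) 1,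
        Continuous H ∧
        (∀ p : {p : G × G // dist (φ p.1) (φ p.2) > 2 * a},
          H (⟨0, by norm_num⟩, p) = g ⟨p.1, fun h => by
            have h2 := p.2; rw [h] at h2; simp [dist_self] at h2; linarith⟩) ∧
        (∀ p : {p : G × G // dist (φ p.1) (φ p.2) > 2 * a},
          (H (⟨1, by norm_num⟩, p) : EuclideanSpace ℝ (Fin 2)) =
            ‖φ p.1.1 - φ p.1.2‖⁻¹ • (φ p.1.1 - φ p.1.2)) ∧
        (∀ (t : Set.Icc (0 : ℝ) 1) (p q : {p : G × G // dist (φ p.1) (φ p.2) > 2 * a}),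
          q.1 = (p.1.2, p.1.1) →
          (H (t, q) : EuclideanSpace ℝ (Fin 2)) = -(H (t, p) : EuclideanSpace ℝ (Fin 2))) := by
  obtain ⟨f, hf, hfi, hfa⟩ := hemb
  have hsep (p : {p : G × G // p.1 ≠ p.2}) : f p.1.1 - f p.1.2 ≠ 0 :=
    sub_ne_zero.2 fun h => p.2 (hfi h)
  have hseg (q : Icc (0 : ℝ) 1 × {p : G × G // dist (φ p.1) (φ p.2) > 2 * a}) :
      lineMap (f q.2.1.1 - f q.2.1.2) (φ q.2.1.1 - φ q.2.1.2) (q.1 : ℝ) ≠ 0 := by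
    refine lineMap_ne_zero_of_norm_sub_lt ?_ q.1.2
    have hA := q.2.2
    rw [dist_eq_norm] at hA
    linarith [norm_chord_sub_chord_le hfa q.2.1.1 q.2.1.2]
  refine ⟨sphereNormalize _ hsep, continuous_sphereNormalize hsep (by fun_prop),
    fun p q hq => coe_sphereNormalize_of_eq_neg hsep (by simp [hq]),
    sphereNormalize _ hseg, continuous_sphereNormalize hseg (by fun_prop),
    fun p => by simp [sphereNormalize], fun p => by simp [sphereNormalize],
    fun t p q hq => coe_sphereNormalize_of_eq_neg hseg ?_⟩
  simp only [hq, ← neg_sub (f p.1.1), ← neg_sub (φ p.1.1), lineMap_neg_neg]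
end
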